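/- Let K be a field and f = ∑_{n≥0} f_n x^n a formal power series over K with f_0 = 1. Then the following are equivalent: (i) the Hankel determinants d(n) = det(f_{i+j})_{i,j=0}^{n} and d_1(n) = det(f_{i+j+1})_{i,j=0}^{n} are nonzero for every n ≥ 0; (ii) f has an S-fraction representation f = 1/(1 − a_0 x/(1 − a_1 x/(1 − ⋯))) with all a_k ≠ 0, i.e. there exist a sequence (a_k)_{k≥0} of nonzero elements of K and a sequence of formal power series (F^{(k)})_{k≥0} with F^{(0)} = f and F^{(k)} · (1 − a_k x F^{(k+1)}) = 1 for all k ≥ 0. Moreover, in that case the coefficients are uniquely determined by a_0 a_2 ⋯ a_{2n} = d_1(n)/d(n) and a_1 a_3 ⋯ a_{2n−1} = d(n)/d_1(n−1). -/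

import Mathlib

/-!
If `g * (1 - a X g') = 1`, put `w = 1 - a X g'`. Multiplying a Hankel matrix of `g` on the left
by the unitriangular Toeplitz matrix of `w` and using `w * g = 1` turns it into minus a Hankel
matrix of `w` times the transposed Toeplitz matrix of `g`, and the Hankel matrices of `w` are `-a`
times those of `g'`. Hence `d_g(n + 1) = a ^ (n + 1) d₁_{g'}(n)` and
`d₁_g(n) = a ^ (n + 1) d_{g'}(n)`. Along an S-fraction these relations telescope to the product
formulas, which force the Hankel determinants to be nonzero. Conversely, `d₁_g(0) = g₁ ≠ 0` lets
one peel off one level `g' = (1 - g⁻¹) / (g₁ X)`, and the same relations pass nonvanishing on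
to `g'`.
-/

open Finset Matrix

noncomputable section

theorem Fin.sum_ite_val_le {M : Type*} [AddCommMonoid M] {N : ℕ} (i : Fin N) (g : ℕ → M) :
    ∑ k : Fin N, (if (k : ℕ) ≤ i then g k else 0) = ∑ k ∈ range ((i : ℕ) + 1), g k := by
  rw [Fin.sum_univ_eq_sum_range (fun k => if k ≤ i then g k else 0), ← sum_filter]
  congr 1
  ext k
  simp only [mem_filter, mem_range]
  omega

theorem Matrix.det_eq_det_submatrix_succ_succ_of_col_zero {R : Type*} [CommRing R] {n : ℕ}
    (A : Matrix (Fin (n + 1)) (Fin (n + 1)) R)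
    (hA : ∀ i, A i 0 = if (i : ℕ) = 0 then 1 else 0) :
    A.det = (A.submatrix Fin.succ Fin.succ).det := by
  rw [det_succ_column_zero, sum_eq_single 0]
  · simp [hA]
  · intro i _ hi
    simp [hA, Fin.val_eq_zero_iff, hi]
  · simp

namespace PowerSeries

variable {R : Type*} [CommRing R]

/-- `hankel f c n` is `(f_{i+j+c})_{0 ≤ i, j ≤ n}`: its size is `n + 1`. -/
def hankel (f : R⟦X⟧) (c n : ℕ) : Matrix (Fin (n + 1)) (Fin (n + 1)) R :=
  Matrix.of fun i j => coeff ((i : ℕ) + j + c) f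

def lowerToeplitz (f : R⟦X⟧) (n : ℕ) : Matrix (Fin (n + 1)) (Fin (n + 1)) R :=
  Matrix.of fun i j => if (j : ℕ) ≤ i then coeff ((i : ℕ) - j) f else 0

theorem det_lowerToeplitz (f : R⟦X⟧) (n : ℕ) :
    (lowerToeplitz f n).det = constantCoeff f ^ (n + 1) := by
  rw [det_of_isLowerTriangular _ fun i j (hij : i < j) => by simp [lowerToeplitz, hij]]
  simp [lowerToeplitz]

theorem coeff_mul_eq_sum_range (f g : R⟦X⟧) (m : ℕ) :
    coeff m (f * g) = ∑ k ∈ range (m + 1), coeff k f * coeff (m - k) g := by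
  rw [coeff_mul, Nat.sum_antidiagonal_eq_sum_range_succ (fun i j => coeff i f * coeff j g)]

theorem lowerToeplitz_mul_hankel_apply (u f : R⟦X⟧) (c n : ℕ) (i j : Fin (n + 1)) :
    (lowerToeplitz u n * hankel f c n) i j =
      ∑ k ∈ range ((i : ℕ) + 1), coeff ((i : ℕ) - k) u * coeff (k + j + c) f := by
  simp only [Matrix.mul_apply, lowerToeplitz, hankel, Matrix.of_apply, ite_mul, zero_mul]
  exact Fin.sum_ite_val_le i fun k => coeff ((i : ℕ) - k) u * coeff (k + j + c) f

theorem hankel_mul_lowerToeplitz_transpose_apply (u f : R⟦X⟧) (c n : ℕ) (i j : Fin (n + 1)) :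
    (hankel u c n * (lowerToeplitz f n)ᵀ) i j =
      ∑ k ∈ range ((j : ℕ) + 1), coeff ((i : ℕ) + k + c) u * coeff ((j : ℕ) - k) f := by
  simp only [Matrix.mul_apply, lowerToeplitz, hankel, Matrix.transpose_apply, Matrix.of_apply,
    mul_ite, mul_zero]
  exact Fin.sum_ite_val_le j fun k => coeff ((i : ℕ) + k + c) u * coeff ((j : ℕ) - k) f

/-- The coefficient of `X ^ (p + q + 1)` in `f * u = 1`, split at the `p`-th coefficient of `u`. -/
theorem sum_coeff_mul_coeff_eq_neg (u f : R⟦X⟧) (hfu : f * u = 1) (p q : ℕ) :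
    ∑ k ∈ range (p + 1), coeff (p - k) u * coeff (k + q + 1) f =
      -∑ k ∈ range (q + 1), coeff (p + k + 1) u * coeff (q - k) f := by
  have h := coeff_mul_eq_sum_range f u (p + q + 1)
  rw [hfu, coeff_one, if_neg (by omega), show p + q + 1 + 1 = (q + 1) + (p + 1) by omega,
    sum_range_add] at h
  rw [eq_neg_iff_add_eq_zero, h, add_comm, ← sum_range_reflect]
  congr 1 <;> refine sum_congr rfl fun k hk => ?_ <;> rw [mem_range] at hk <;> rw [mul_comm] <;>
    congr 3 <;> omega

theorem lowerToeplitz_mul_hankel_one (u f : R⟦X⟧) (hfu : f * u = 1) (n : ℕ) :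
    lowerToeplitz u n * hankel f 1 n = -(hankel u 1 n * (lowerToeplitz f n)ᵀ) := by
  ext i j
  rw [lowerToeplitz_mul_hankel_apply, Matrix.neg_apply, hankel_mul_lowerToeplitz_transpose_apply]
  exact sum_coeff_mul_coeff_eq_neg u f hfu i j

theorem constantCoeff_eq_one_of_mul_eq_one {f u : R⟦X⟧} (hfu : f * u = 1)
    (hu : constantCoeff u = 1) : constantCoeff f = 1 := by
  simpa [hu] using congrArg constantCoeff hfu

theorem det_hankel_one_of_mul_eq_one (u f : R⟦X⟧) (hfu : f * u = 1) (hu : constantCoeff u = 1)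
    (n : ℕ) : (hankel f 1 n).det = (-1) ^ (n + 1) * (hankel u 1 n).det := by
  have h := congrArg det (lowerToeplitz_mul_hankel_one u f hfu n)
  rwa [det_mul, det_lowerToeplitz, hu, one_pow, one_mul, det_neg, det_mul, det_transpose,
    det_lowerToeplitz, constantCoeff_eq_one_of_mul_eq_one hfu hu, one_pow, mul_one,
    Fintype.card_fin] at h

theorem det_hankel_zero_succ_of_mul_eq_one (u f : R⟦X⟧) (hfu : f * u = 1)
    (hu : constantCoeff u = 1) (n : ℕ) :
    (hankel f 0 (n + 1)).det = (-1) ^ (n + 1) * (hankel u 2 n).det := by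
  have hcol : ∀ i, (lowerToeplitz u (n + 1) * hankel f 0 (n + 1)) i 0 =
      if (i : ℕ) = 0 then 1 else 0 := by
    intro i
    have h := coeff_mul_eq_sum_range f u i
    rw [hfu, coeff_one] at h
    rw [lowerToeplitz_mul_hankel_apply, h]
    exact sum_congr rfl fun k _ => mul_comm _ _
  have hsub : (lowerToeplitz u (n + 1) * hankel f 0 (n + 1)).submatrix Fin.succ Fin.succ =
      -(hankel u 2 n * (lowerToeplitz f n)ᵀ) := by
    ext i j
    rw [submatrix_apply, lowerToeplitz_mul_hankel_apply, Matrix.neg_apply,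
      hankel_mul_lowerToeplitz_transpose_apply]
    simp only [Fin.val_succ]
    convert sum_coeff_mul_coeff_eq_neg u f hfu (i + 1) j using 5
    · rfl
    · rw [add_right_comm _ 1, add_assoc]
  calc (hankel f 0 (n + 1)).det = (lowerToeplitz u (n + 1) * hankel f 0 (n + 1)).det := by
        rw [det_mul, det_lowerToeplitz, hu, one_pow, one_mul]
    _ = ((lowerToeplitz u (n + 1) * hankel f 0 (n + 1)).submatrix Fin.succ Fin.succ).det :=
        det_eq_det_submatrix_succ_succ_of_col_zero _ hcol
    _ = (-1) ^ (n + 1) * (hankel u 2 n).det := by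
        rw [hsub, det_neg, det_mul, det_transpose, det_lowerToeplitz,
          constantCoeff_eq_one_of_mul_eq_one hfu hu, one_pow, mul_one, Fintype.card_fin]

theorem det_hankel_zero_zero (g : R⟦X⟧) : (hankel g 0 0).det = constantCoeff g := by
  simp [hankel]

theorem det_hankel_one_zero (g : R⟦X⟧) : (hankel g 1 0).det = coeff 1 g := by
  simp [hankel]

theorem coeff_succ_one_sub_C_mul_X_mul (a : R) (g' : R⟦X⟧) (m : ℕ) :
    coeff (m + 1) (1 - C a * X * g') = -(a * coeff m g') := by
  rw [map_sub, coeff_one, if_neg m.succ_ne_zero, mul_assoc, coeff_C_mul, coeff_succ_X_mul,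
    zero_sub]

theorem hankel_one_sub_C_mul_X_mul (a : R) (g' : R⟦X⟧) (c n : ℕ) :
    hankel (1 - C a * X * g') (c + 1) n = (-a) • hankel g' c n := by
  ext i j
  simp only [hankel, of_apply, Matrix.smul_apply, smul_eq_mul, ← add_assoc,
    coeff_succ_one_sub_C_mul_X_mul, neg_mul]

section SFractionStep

variable {a : R} {g g' : R⟦X⟧}

theorem constantCoeff_eq_one_of_mul_one_sub_C_mul_X_mul (h : g * (1 - C a * X * g') = 1) :
    constantCoeff g = 1 :=
  constantCoeff_eq_one_of_mul_eq_one h (by simp)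

theorem det_hankel_one_of_mul_one_sub_C_mul_X_mul (h : g * (1 - C a * X * g') = 1) (n : ℕ) :
    (hankel g 1 n).det = a ^ (n + 1) * (hankel g' 0 n).det := by
  rw [det_hankel_one_of_mul_eq_one _ g h (by simp), hankel_one_sub_C_mul_X_mul a g' 0,
    det_smul, Fintype.card_fin, ← mul_assoc, ← mul_pow, neg_one_mul, neg_neg]

theorem det_hankel_zero_succ_of_mul_one_sub_C_mul_X_mul (h : g * (1 - C a * X * g') = 1)
    (n : ℕ) : (hankel g 0 (n + 1)).det = a ^ (n + 1) * (hankel g' 1 n).det := by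
  rw [det_hankel_zero_succ_of_mul_eq_one _ g h (by simp), hankel_one_sub_C_mul_X_mul a g' 1,
    det_smul, Fintype.card_fin, ← mul_assoc, ← mul_pow, neg_one_mul, neg_neg]

end SFractionStep

section SFraction

variable {a : ℕ → R} {F : ℕ → R⟦X⟧}

theorem det_hankel_one_eq_mul_prod_of_sFraction
    (hF : ∀ k, F k * (1 - C (a k) * X * F (k + 1)) = 1) (n k : ℕ) :
    (hankel (F k) 1 n).det = (hankel (F k) 0 n).det * ∏ j ∈ range (n + 1), a (k + 2 * j) := by
  induction n generalizing k with
  | zero =>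
    rw [det_hankel_one_of_mul_one_sub_C_mul_X_mul (hF k), det_hankel_zero_zero,
      det_hankel_zero_zero, constantCoeff_eq_one_of_mul_one_sub_C_mul_X_mul (hF k),
      constantCoeff_eq_one_of_mul_one_sub_C_mul_X_mul (hF (k + 1))]
    simp
  | succ n ih =>
    have hidx : ∀ j, k + 2 * (j + 1) = k + 1 + 1 + 2 * j := fun j => by omega
    rw [det_hankel_one_of_mul_one_sub_C_mul_X_mul (hF k),
      det_hankel_zero_succ_of_mul_one_sub_C_mul_X_mul (hF k),
      det_hankel_zero_succ_of_mul_one_sub_C_mul_X_mul (hF (k + 1)),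
      det_hankel_one_of_mul_one_sub_C_mul_X_mul (hF (k + 1)), ih (k + 1 + 1),
      prod_range_succ' (fun j => a (k + 2 * j))]
    simp only [hidx, mul_zero, add_zero]
    ring

theorem det_hankel_zero_succ_eq_mul_prod_of_sFraction
    (hF : ∀ k, F k * (1 - C (a k) * X * F (k + 1)) = 1) (n k : ℕ) :
    (hankel (F k) 0 (n + 1)).det =
      (hankel (F k) 1 n).det * ∏ j ∈ range (n + 1), a (k + 2 * j + 1) := by
  rw [det_hankel_zero_succ_of_mul_one_sub_C_mul_X_mul (hF k),
    det_hankel_one_eq_mul_prod_of_sFraction hF n (k + 1),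
    det_hankel_one_of_mul_one_sub_C_mul_X_mul (hF k)]
  simp only [add_right_comm k 1]
  ring

theorem det_hankel_ne_zero_of_sFraction [IsDomain R]
    (hF : ∀ k, F k * (1 - C (a k) * X * F (k + 1)) = 1) (ha : ∀ k, a k ≠ 0) (k n : ℕ) :
    (hankel (F k) 0 n).det ≠ 0 ∧ (hankel (F k) 1 n).det ≠ 0 := by
  have hprod : ∀ (b : ℕ → ℕ) (m : ℕ), ∏ j ∈ range m, a (b j) ≠ 0 :=
    fun b m => prod_ne_zero_iff.2 fun j _ => ha (b j)
  have hone : ∀ n, (hankel (F k) 0 n).det ≠ 0 → (hankel (F k) 1 n).det ≠ 0 := fun n hd => by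
    rw [det_hankel_one_eq_mul_prod_of_sFraction hF]
    exact mul_ne_zero hd (hprod _ _)
  have hzero : ∀ n, (hankel (F k) 0 n).det ≠ 0 := by
    intro n
    induction n with
    | zero =>
      rw [det_hankel_zero_zero, constantCoeff_eq_one_of_mul_one_sub_C_mul_X_mul (hF k)]
      exact one_ne_zero
    | succ n ih =>
      rw [det_hankel_zero_succ_eq_mul_prod_of_sFraction hF]
      exact mul_ne_zero (hone n ih) (hprod _ _)
  exact ⟨hzero n, hone n (hzero n)⟩

end SFraction

section Field

variable {K : Type*} [Field K] {g : K⟦X⟧}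

/-- The `g'` with `g = 1 / (1 - g₁ X g')`, i.e. `g' = (1 - g⁻¹) / (g₁ X)`. -/
def sFractionTail (g : K⟦X⟧) : K⟦X⟧ :=
  mk fun m => -coeff (m + 1) g⁻¹ / coeff 1 g

theorem mul_one_sub_C_mul_X_mul_sFractionTail (hg0 : constantCoeff g = 1)
    (hg1 : coeff 1 g ≠ 0) : g * (1 - C (coeff 1 g) * X * sFractionTail g) = 1 := by
  suffices h : 1 - C (coeff 1 g) * X * sFractionTail g = g⁻¹ by
    rw [h, PowerSeries.mul_inv_cancel g (by simp [hg0])]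
  ext (_ | m)
  · simp [hg0]
  · rw [coeff_succ_one_sub_C_mul_X_mul, sFractionTail, coeff_mk]
    field_simp

theorem constantCoeff_sFractionTail (hg0 : constantCoeff g = 1) (hg1 : coeff 1 g ≠ 0) :
    constantCoeff (sFractionTail g) = 1 := by
  have h := det_hankel_one_of_mul_one_sub_C_mul_X_mul
    (mul_one_sub_C_mul_X_mul_sFractionTail hg0 hg1) 0
  rw [det_hankel_one_zero, det_hankel_zero_zero, pow_one] at h
  exact (mul_eq_left₀ hg1).1 h.symm

theorem det_hankel_sFractionTail_ne_zero (hg0 : constantCoeff g = 1)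
    (hH : ∀ n, (hankel g 0 n).det ≠ 0 ∧ (hankel g 1 n).det ≠ 0) (n : ℕ) :
    (hankel (sFractionTail g) 0 n).det ≠ 0 ∧ (hankel (sFractionTail g) 1 n).det ≠ 0 := by
  have h := mul_one_sub_C_mul_X_mul_sFractionTail hg0 (det_hankel_one_zero g ▸ (hH 0).2)
  constructor
  · exact right_ne_zero_of_mul (det_hankel_one_of_mul_one_sub_C_mul_X_mul h n ▸ (hH n).2)
  · exact right_ne_zero_of_mul
      (det_hankel_zero_succ_of_mul_one_sub_C_mul_X_mul h n ▸ (hH (n + 1)).1)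

theorem exists_sFraction_of_det_hankel_ne_zero (f : K⟦X⟧) (hf0 : constantCoeff f = 1)
    (hH : ∀ n, (hankel f 0 n).det ≠ 0 ∧ (hankel f 1 n).det ≠ 0) :
    ∃ (a : ℕ → K) (F : ℕ → K⟦X⟧), (∀ k, a k ≠ 0) ∧ F 0 = f ∧
      ∀ k, F k * (1 - C (a k) * X * F (k + 1)) = 1 := by
  set F : ℕ → K⟦X⟧ := fun k => sFractionTail^[k] f
  have hFsucc : ∀ k, F (k + 1) = sFractionTail (F k) := fun k =>
    Function.iterate_succ_apply' sFractionTail k f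
  have hinv : ∀ k, constantCoeff (F k) = 1 ∧
      ∀ n, (hankel (F k) 0 n).det ≠ 0 ∧ (hankel (F k) 1 n).det ≠ 0 := by
    intro k
    induction k with
    | zero => exact ⟨hf0, hH⟩
    | succ k ih =>
      rw [hFsucc]
      exact ⟨constantCoeff_sFractionTail ih.1 (det_hankel_one_zero (F k) ▸ (ih.2 0).2),
        det_hankel_sFractionTail_ne_zero ih.1 ih.2⟩
  have ha : ∀ k, coeff 1 (F k) ≠ 0 := fun k => det_hankel_one_zero (F k) ▸ ((hinv k).2 0).2
  exact ⟨fun k => coeff 1 (F k), F, ha, rfl, fun k =>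
    hFsucc k ▸ mul_one_sub_C_mul_X_mul_sFractionTail (hinv k).1 (ha k)⟩

end Field

end PowerSeries

end

/-- Corollary 3.1: a power series `f` with `f₀ = 1` has an S-fraction representation
`f = 1/(1 − a₀x/(1 − a₁x/(1 − ⋯)))` with all `a_k ≠ 0` if and only if all Hankel
determinants `d(n) = det(f_{i+j})ⁿ` and `d₁(n) = det(f_{i+j+1})ⁿ` are nonzero; moreover,
in that case the coefficients are determined by `a₀a₂⋯a_{2n} = d₁(n)/d(n)` and
`a₁a₃⋯a_{2n−1} = d(n)/d₁(n−1)`. -/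
theorem sFrac_iff_hankel_nonzero {K : Type*} [Field K] (f : PowerSeries K)
    (hf0 : PowerSeries.coeff (R := K) 0 f = 1) :
    ((∀ n : ℕ,
        Matrix.det (Matrix.of fun i j : Fin (n + 1) =>
          PowerSeries.coeff (R := K) ((i : ℕ) + (j : ℕ)) f) ≠ 0 ∧
        Matrix.det (Matrix.of fun i j : Fin (n + 1) =>
          PowerSeries.coeff (R := K) ((i : ℕ) + (j : ℕ) + 1) f) ≠ 0) ↔
      (∃ (a : ℕ → K) (F : ℕ → PowerSeries K), (∀ k : ℕ, a k ≠ 0) ∧ F 0 = f ∧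
        ∀ k : ℕ, F k * (1 - PowerSeries.C (R := K) (a k) * PowerSeries.X * F (k + 1)) = 1)) ∧
    (∀ (a : ℕ → K) (F : ℕ → PowerSeries K), (∀ k : ℕ, a k ≠ 0) → F 0 = f →
      (∀ k : ℕ, F k * (1 - PowerSeries.C (R := K) (a k) * PowerSeries.X * F (k + 1)) = 1) →
      (∀ n : ℕ,
        ∏ j ∈ Finset.range (n + 1), a (2 * j) =
          Matrix.det (Matrix.of fun i j : Fin (n + 1) =>
              PowerSeries.coeff (R := K) ((i : ℕ) + (j : ℕ) + 1) f) /
            Matrix.det (Matrix.of fun i j : Fin (n + 1) =>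
              PowerSeries.coeff (R := K) ((i : ℕ) + (j : ℕ)) f)) ∧
      (∀ n : ℕ, 1 ≤ n →
        ∏ j ∈ Finset.range n, a (2 * j + 1) =
          Matrix.det (Matrix.of fun i j : Fin (n + 1) =>
              PowerSeries.coeff (R := K) ((i : ℕ) + (j : ℕ)) f) /
            Matrix.det (Matrix.of fun i j : Fin n =>
              PowerSeries.coeff (R := K) ((i : ℕ) + (j : ℕ) + 1) f))) := by
  refine ⟨⟨fun hH => PowerSeries.exists_sFraction_of_det_hankel_ne_zero f
      (by rwa [← PowerSeries.coeff_zero_eq_constantCoeff_apply]) hH, ?_⟩, ?_⟩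
  · rintro ⟨a, F, ha, rfl, hF⟩ n
    exact PowerSeries.det_hankel_ne_zero_of_sFraction hF ha 0 n
  · rintro a F ha rfl hF
    have hdet := PowerSeries.det_hankel_ne_zero_of_sFraction hF ha 0
    refine ⟨fun n => ?_, fun n hn => ?_⟩
    · have h := PowerSeries.det_hankel_one_eq_mul_prod_of_sFraction hF n 0
      simp only [zero_add] at h
      exact (eq_div_iff (hdet n).1).2 (h.trans (mul_comm _ _)).symm
    · obtain ⟨m, rfl⟩ := Nat.exists_eq_add_of_le' hn
      have h := PowerSeries.det_hankel_zero_succ_eq_mul_prod_of_sFraction hF m 0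
      simp only [zero_add] at h
      exact (eq_div_iff (hdet m).2).2 (h.trans (mul_comm _ _)).symm
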